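/- Suppose rank(N_i) = rank(M_i) for all i ∈ {0,...,n-1} (same BCJR and product-trellis notation). If additionally the rows of G are linearly independent and all spans are nonempty with a_l ≠ b_l, then the starting points a_1,...,a_k are pairwise distinct and the endpoints b_1,...,b_k are pairwise distinct. -/

import Mathlib

/-!
Since `G Hᵀ = 0`, the vectors `u_l j = G_{lj} H_j` sum to zero over `ZMod n`, so row `l` of `N_i`
is the partial sum of `u_l` over the circular window `[a_l, i)`. It vanishes whenever
`i ∉ (a_l, b_l]`, so `rank N_i = rank M_i` forces the rows of `N_i` that are active at `i` to be
linearly independent. But at `i = a_l + 1` row `l` is `G_{l a_l} H_{a_l}`, and at `i = b_l` it is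
`-G_{l b_l} H_{b_l}`: two rows with a common starting point, or a common endpoint, would be
proportional.
-/

/-- Membership in the half-open circular interval `(a, b]` on `ZMod n`, with `(a,a] = ∅`. -/
def circMem (n : ℕ) [NeZero n] (a b j : ZMod n) : Prop :=
  j ≠ a ∧ (j - a).val ≤ (b - a).val

instance (n : ℕ) [NeZero n] (a b j : ZMod n) : Decidable (circMem n a b j) :=
  inferInstanceAs (Decidable (_ ∧ _))

/-- `(a, b]` is a span of `g`. -/
def IsSpan {F : Type*} [Field F] {n : ℕ} [NeZero n] (g : ZMod n → F) (a b : ZMod n) : Prop :=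
  g a ≠ 0 ∧ g b ≠ 0 ∧ ∀ j : ZMod n, ¬ (j = a ∨ circMem n a b j) → g j = 0

open Finset

theorem sum_range_eq_zero_of_eq_zero_between {M : Type*} [AddCommMonoid M] {v : ℕ → M}
    {n w e : ℕ} (htot : ∑ s ∈ range n, v s = 0) (hv : ∀ s, w < s → s < n → v s = 0)
    (hwe : w < e) (hen : e ≤ n) : ∑ s ∈ range e, v s = 0 := by
  rw [← htot]
  refine sum_subset (range_mono hen) fun s hs hse => hv s ?_ (mem_range.mp hs)
  rw [mem_range, not_lt] at hse
  exact hwe.trans_le hse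

section ZModSums

variable {M : Type*} {n : ℕ}

/-- The sum of `u` over the circular window `[a, i)`, which is empty (not all of `ZMod n`) when
`i = a`. -/
def windowSum [AddCommMonoid M] (u : ZMod n → M) (a i : ZMod n) : M :=
  ∑ s ∈ range (i - a).val, u (a + s)

theorem windowSum_self_add_one [AddCommMonoid M] (hn : n ≠ 1)
    (u : ZMod n → M) (a : ZMod n) : windowSum u a (a + 1) = u a := by
  simp [windowSum, ZMod.val_one'' hn]

variable [NeZero n]

theorem ZMod.sum_range_natCast_eq_sum_filter_val_lt [AddCommMonoid M] {t : ℕ} (ht : t ≤ n)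
    (u : ZMod n → M) :
    ∑ s ∈ range t, u s = ∑ j ∈ univ.filter (fun j : ZMod n => j.val < t), u j := by
  refine sum_nbij' (fun s => (s : ZMod n)) ZMod.val (fun s hs => ?_) (fun j hj => ?_)
    (fun s hs => ?_) (fun j _ => ZMod.natCast_zmod_val j) (fun _ _ => rfl)
  · rw [mem_range] at hs
    simpa [ZMod.val_cast_of_lt (hs.trans_le ht)] using hs
  · simpa using hj
  · rw [mem_range] at hs
    exact ZMod.val_cast_of_lt (hs.trans_le ht)

theorem ZMod.sum_range_natCast_add [AddCommMonoid M] (u : ZMod n → M) (c : ZMod n) :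
    ∑ s ∈ range n, u (c + s) = ∑ j, u j := by
  rw [ZMod.sum_range_natCast_eq_sum_filter_val_lt le_rfl (fun j => u (c + j))]
  rw [filter_true_of_mem fun j _ => ZMod.val_lt j]
  exact Fintype.sum_equiv (Equiv.addLeft c) _ _ fun _ => rfl

variable [AddCommGroup M] {u : ZMod n → M}

theorem ZMod.periodic_sum_range_natCast (hu : ∑ j, u j = 0) :
    Function.Periodic (fun t : ℕ => ∑ s ∈ range t, u s) n := by
  intro t
  simp only [sum_range_add, Nat.cast_add, ZMod.sum_range_natCast_add, hu, add_zero]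

theorem sum_range_natCast_sub_eq_windowSum (hu : ∑ j, u j = 0) (a : ZMod n) (i : ℕ) :
    ∑ s ∈ range i, u s - ∑ s ∈ range a.val, u s = windowSum u a i := by
  have hwrap : (a.val + ((i : ZMod n) - a).val) % n = i % n := by
    rw [← ZMod.val_add, add_sub_cancel, ZMod.val_natCast]
  have hperiod := ZMod.periodic_sum_range_natCast hu
  rw [← hperiod.map_mod_nat i, ← hwrap, hperiod.map_mod_nat, sum_range_add, add_sub_cancel_left]
  simp only [windowSum, Nat.cast_add, ZMod.natCast_zmod_val]

theorem eq_windowSum_of_sum_eq_zero (hu : ∑ j, u j = 0) (a : ZMod n) {x : ℕ → M}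
    (hx0 : x 0 = ∑ j ∈ univ.filter (fun j : ZMod n => a.val ≤ j.val), u j)
    (hxs : ∀ i : ℕ, x (i + 1) = x i + u i) (i : ℕ) :
    x i = windowSum u a i := by
  have hacc : x i = x 0 + ∑ s ∈ range i, u s := by
    induction i with
    | zero => simp
    | succ i ih => rw [hxs, ih, sum_range_succ, add_assoc]
  have htail : x 0 = -∑ s ∈ range a.val, u s := by
    rw [ZMod.sum_range_natCast_eq_sum_filter_val_lt (ZMod.val_lt a).le, eq_neg_iff_add_eq_zero,
      hx0, ← hu, ← sum_filter_add_sum_filter_not univ (fun j : ZMod n => a.val ≤ j.val)]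
    simp only [not_le]
  rw [hacc, htail, neg_add_eq_sub, sum_range_natCast_sub_eq_windowSum hu]

end ZModSums

section CircularSpans

variable {M : Type*} [AddCommGroup M] {n : ℕ} [NeZero n] {u : ZMod n → M} {a b : ZMod n}

theorem circMem_iff (a b j : ZMod n) :
    circMem n a b j ↔ 0 < (j - a).val ∧ (j - a).val ≤ (b - a).val := by
  rw [circMem, ZMod.val_pos, sub_ne_zero]

theorem circMem_right (h : a ≠ b) : circMem n a b b :=
  ⟨h.symm, le_rfl⟩

theorem circMem_self_add_one (h : a ≠ b) : circMem n a b (a + 1) := by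
  have hn : n ≠ 1 := ZMod.nontrivial_iff.mp (nontrivial_of_ne a b h)
  rw [circMem_iff, add_sub_cancel_left, ZMod.val_one'' hn]
  exact ⟨Nat.one_pos, Nat.one_le_iff_ne_zero.mpr fun h0 =>
    h (sub_eq_zero.mp ((ZMod.val_eq_zero _).mp h0)).symm⟩

theorem sum_range_add_eq_zero_of_lt (hu : ∑ j, u j = 0)
    (hsupp : ∀ j, ¬ (j = a ∨ circMem n a b j) → u j = 0) {e : ℕ} (hwe : (b - a).val < e)
    (hen : e ≤ n) :
    ∑ s ∈ range e, u (a + s) = 0 := by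
  refine sum_range_eq_zero_of_eq_zero_between (w := (b - a).val)
    (by rw [ZMod.sum_range_natCast_add, hu]) (fun s hws hsn => hsupp _ ?_) hwe hen
  have hval : (a + s - a).val = s := by rw [add_sub_cancel_left, ZMod.val_cast_of_lt hsn]
  rintro (h | h)
  · rw [h, sub_self, ZMod.val_zero] at hval
    omega
  · exact absurd h.2 (by omega)

theorem windowSum_eq_zero_of_not_circMem (hu : ∑ j, u j = 0)
    (hsupp : ∀ j, ¬ (j = a ∨ circMem n a b j) → u j = 0) {i : ZMod n}
    (hi : ¬ circMem n a b i) :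
    windowSum u a i = 0 := by
  rw [circMem_iff, not_and_or, not_lt, Nat.le_zero, not_le] at hi
  rcases hi with h0 | hlt
  · rw [windowSum, h0, sum_range_zero]
  · exact sum_range_add_eq_zero_of_lt hu hsupp hlt (ZMod.val_lt _).le

theorem windowSum_right (hu : ∑ j, u j = 0)
    (hsupp : ∀ j, ¬ (j = a ∨ circMem n a b j) → u j = 0) : windowSum u a b = -u b := by
  have h := sum_range_add_eq_zero_of_lt hu hsupp (Nat.lt_succ_self _) (ZMod.val_lt (b - a))
  rw [sum_range_succ, ZMod.natCast_zmod_val, add_sub_cancel] at h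
  exact eq_neg_of_add_eq_zero_left h

end CircularSpans

theorem Matrix.rank_diagonal_ite {ι F : Type*} [Fintype ι] [DecidableEq ι] [Field F]
    (p : ι → Prop) [DecidablePred p] :
    (Matrix.diagonal fun i => if p i then (1 : F) else 0).rank = (univ.filter p).card := by
  classical
  rw [Matrix.rank_diagonal, Fintype.card_subtype]
  simp

theorem Matrix.rank_lt_card_of_mem_span_singleton {ι κ F : Type*} [Fintype ι] [Fintype κ]
    [Field F] (A : Matrix ι κ F) (S : Finset ι) (hzero : ∀ i ∉ S, A i = 0)
    {l l' : ι} (hl : l ∈ S) (hl' : l' ∈ S) (hll' : l ≠ l') (hmem : A l' ∈ F ∙ A l) :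
    A.rank < S.card := by
  classical
  have hspan : Submodule.span F (Set.range A) ≤
      Submodule.span F ((S.erase l').image A : Set (κ → F)) := by
    have hlmem : A l ∈ Submodule.span F ((S.erase l').image A : Set (κ → F)) :=
      Submodule.subset_span (mem_image_of_mem A (mem_erase.mpr ⟨hll', hl⟩))
    rw [Submodule.span_le]
    rintro _ ⟨i, rfl⟩
    by_cases hi : i ∈ S
    · by_cases hii' : i = l'
      · subst hii'
        exact Submodule.span_singleton_le_iff_mem _ _ |>.mpr hlmem hmem
      · exact Submodule.subset_span (mem_image_of_mem A (mem_erase.mpr ⟨hii', hi⟩))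
    · rw [SetLike.mem_coe, hzero i hi]
      exact Submodule.zero_mem _
  calc A.rank ≤ ((S.erase l').image A).card := by
        rw [Matrix.rank_eq_finrank_span_row]
        exact (Submodule.finrank_mono hspan).trans (finrank_span_finset_le_card _)
    _ ≤ (S.erase l').card := card_image_le
    _ < S.card := card_erase_lt_of_mem hl'

theorem smul_mem_span_singleton_smul {F V : Type*} [Field F] [AddCommGroup V] [Module F V]
    {c : F} (hc : c ≠ 0) (c' : F) (v : V) : c' • v ∈ F ∙ (c • v) := by
  rw [Submodule.span_singleton_smul_eq (IsUnit.mk0 c hc)]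
  exact Submodule.smul_mem _ _ (Submodule.mem_span_singleton_self v)

theorem distinct_span_points_of_rank_eq_general {F : Type*} [Field F] {n k m : ℕ} [NeZero n]
    (G : Matrix (Fin k) (ZMod n) F) (H : Matrix (Fin m) (ZMod n) F)
    (hGH : G * H.transpose = 0)
    (a b : Fin k → ZMod n)
    (hspan : ∀ l, IsSpan (G l) (a l) (b l))
    (hne : ∀ l, a l ≠ b l)
    (N : ℕ → Matrix (Fin k) (Fin m) F)
    (hN0 : ∀ (l : Fin k) (t : Fin m),
      N 0 l t = ∑ j ∈ Finset.univ.filter (fun j : ZMod n => (a l).val ≤ j.val), G l j * H t j)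
    (hNs : ∀ i : ℕ, N (i + 1) =
      N i + Matrix.of fun l t => G l ((i : ℕ) : ZMod n) * H t ((i : ℕ) : ZMod n))
    (M : ℕ → Matrix (Fin k) (Fin k) F)
    (hM : ∀ i : ℕ, M i = Matrix.diagonal fun l =>
      if circMem n (a l) (b l) ((i : ℕ) : ZMod n) then (1 : F) else 0)
    (hrank : ∀ i : ℕ, i < n → (N i).rank = (M i).rank) :
    Function.Injective a ∧ Function.Injective b := by
  set u : Fin k → ZMod n → Fin m → F := fun l j => G l j • H.transpose j
  have hu : ∀ l, ∑ j, u l j = 0 := fun l => by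
    ext t
    simpa [u, Matrix.mul_apply, Finset.sum_apply, mul_comm] using congrFun (congrFun hGH l) t
  have hsupp : ∀ l j, ¬ (j = a l ∨ circMem n (a l) (b l) j) → u l j = 0 := fun l j hj => by
    simp only [u, (hspan l).2.2 j hj, zero_smul]
  have hrow : ∀ (i : ZMod n) l, N i.val l = windowSum (u l) (a l) i := fun i l => by
    rw [← ZMod.natCast_zmod_val i, ZMod.val_natCast_of_lt (ZMod.val_lt i)]
    refine eq_windowSum_of_sum_eq_zero (hu l) (a l) (x := fun i => N i l) ?_ (fun i => ?_) _
    · ext t; simp [hN0, u, Finset.sum_apply]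
    · ext t; simp [hNs, u]
  have key : ∀ (i : ZMod n) {l l'}, l ≠ l' → circMem n (a l) (b l) i →
      circMem n (a l') (b l') i → N i.val l' ∈ F ∙ N i.val l → False := by
    intro i l l' hll' hl hl' hmem
    have hlt := (N i.val).rank_lt_card_of_mem_span_singleton
      (univ.filter fun l => circMem n (a l) (b l) i)
      (fun l hl => (hrow i l).trans <|
        windowSum_eq_zero_of_not_circMem (hu l) (hsupp l) (by simpa using hl))
      (by simpa) (by simpa) hll' hmem
    rw [hrank i.val (ZMod.val_lt i), hM, Matrix.rank_diagonal_ite, ZMod.natCast_zmod_val] at hlt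
    exact hlt.false
  constructor
  · intro l l' hal
    by_contra hll'
    have hn : n ≠ 1 := ZMod.nontrivial_iff.mp (nontrivial_of_ne _ _ (hne l))
    refine key (a l + 1) hll' (circMem_self_add_one (hne l)) ?_ ?_
    · rw [hal]; exact circMem_self_add_one (hne l')
    · rw [hrow, hrow, ← hal, windowSum_self_add_one hn, windowSum_self_add_one hn]
      exact smul_mem_span_singleton_smul (hspan l).1 _ _
  · intro l l' hbl
    by_contra hll'
    refine key (b l) hll' (circMem_right (hne l)) ?_ ?_
    · rw [hbl]; exact circMem_right (hne l')
    · rw [hrow, hrow, windowSum_right (hu l) (hsupp l), hbl, windowSum_right (hu l') (hsupp l')]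
      simp only [u, ← neg_smul]
      exact smul_mem_span_singleton_smul (neg_ne_zero.mpr (hbl ▸ (hspan l).2.1)) _ _

/-- If `rank N_i = rank M_i` for all `i` and the rows of `G` are linearly independent with
nonempty spans (`a_l ≠ b_l`), then the starting points are pairwise distinct and the
endpoints are pairwise distinct. -/
theorem distinct_span_points_of_rank_eq {F : Type*} [Field F] {n k m : ℕ} [NeZero n]
    (G : Matrix (Fin k) (ZMod n) F) (H : Matrix (Fin m) (ZMod n) F)
    (hGH : G * H.transpose = 0) (hHrank : H.rank = m)
    (a b : Fin k → ZMod n)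
    (hspan : ∀ l, IsSpan (G l) (a l) (b l))
    (hne : ∀ l, a l ≠ b l)
    (hli : LinearIndependent F (fun l : Fin k => G l))
    (N : ℕ → Matrix (Fin k) (Fin m) F)
    (hN0 : ∀ (l : Fin k) (t : Fin m),
      N 0 l t = ∑ j ∈ Finset.univ.filter (fun j : ZMod n => (a l).val ≤ j.val), G l j * H t j)
    (hNs : ∀ i : ℕ, N (i + 1) =
      N i + Matrix.of fun l t => G l ((i : ℕ) : ZMod n) * H t ((i : ℕ) : ZMod n))
    (M : ℕ → Matrix (Fin k) (Fin k) F)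
    (hM : ∀ i : ℕ, M i = Matrix.diagonal fun l =>
      if circMem n (a l) (b l) ((i : ℕ) : ZMod n) then (1 : F) else 0)
    (hrank : ∀ i : ℕ, i < n → (N i).rank = (M i).rank) :
    Function.Injective a ∧ Function.Injective b :=
  distinct_span_points_of_rank_eq_general G H hGH a b hspan hne N hN0 hNs M hM hrank
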